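/- arXiv:1401.0490 — 3 statements merged into one kernel-verified Lean document; each statement's English description precedes it below -/
import Mathlib

section
/- If μ₁ and μ₂ are eigenvalues of the n×n complex matrix polynomial Q(λ) = P(λ) + Δ(λ), then for any nonzero complex γ, the (2n−1)-st singular value of the 2n×2n block matrix F[P(μ₁,μ₂);γ] = [[P(μ₁), 0], [γ·(P(μ₁)−P(μ₂))/(μ₁−μ₂), P(μ₂)]] satisfies s_{2n−1}(F[P(μ₁,μ₂);γ]) ≤ ‖F[Δ(μ₁,μ₂);γ]‖, where F[Δ(μ₁,μ₂);γ] is the analogous block matrix built from Δ and ‖·‖ denotes the spectral norm. -/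
open Matrix BigOperators

noncomputable def sval {N : ℕ} (A : Matrix (Fin N) (Fin N) ℂ) (k : Fin N) : ℝ :=
  Real.sqrt (((Matrix.isHermitian_conjTranspose_mul_self A).eigenvalues ∘
    Tuple.sort (Matrix.isHermitian_conjTranspose_mul_self A).eigenvalues) k.rev)

noncomputable def specNorm {𝕜 : Type*} [RCLike 𝕜] {m n : ℕ} (A : Matrix (Fin m) (Fin n) 𝕜) : ℝ :=
  ‖LinearMap.toContinuousLinearMap (Matrix.toEuclideanLin A)‖

noncomputable def Fblk {n : ℕ} (A B C : Matrix (Fin n) (Fin n) ℂ) (γ : ℂ) :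
    Matrix (Fin (n + n)) (Fin (n + n)) ℂ :=
  Matrix.reindex finSumFinEquiv finSumFinEquiv (Matrix.fromBlocks A 0 (γ • C) B)

noncomputable def evalMP {n m : ℕ} (A : Fin (m + 1) → Matrix (Fin n) (Fin n) ℂ) (lam : ℂ) :
    Matrix (Fin n) (Fin n) ℂ :=
  ∑ j : Fin (m + 1), lam ^ (j : ℕ) • A j

def colPair {n : ℕ} (a b : Fin n → ℂ) : Matrix (Fin n) (Fin 2) ℂ :=
  Matrix.of fun i j => ![a i, b i] j

noncomputable def pinvFC {n m : ℕ} (V : Matrix (Fin n) (Fin m) ℂ) : Matrix (Fin m) (Fin n) ℂ :=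
  (Vᴴ * V)⁻¹ * Vᴴ

/-!
If `x₁, x₂` are null vectors of `Q(μ₁), Q(μ₂)`, the block matrix `F[Q(μ₁,μ₂);γ]` annihilates
`(0, x₂)` and `(x₁, γ (μ₁ - μ₂)⁻¹ x₁)`, so it has a kernel `V` of dimension at least two. Since
`F[Q] = F[P] + F[Δ]`, on `V` we have `F[P] x = -F[Δ] x`, hence `‖F[P] x‖ ≤ ‖F[Δ]‖ ‖x‖`. By the
Courant–Fischer min-max principle for `F[P]ᴴ F[P]`, a two-dimensional subspace on which `F[P]`
shrinks norms by at most `‖F[Δ]‖` forces `s_{2n-1}(F[P]) ≤ ‖F[Δ]‖`.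
-/

open Finset Module RCLike
open scoped InnerProductSpace

namespace OrthonormalBasis

variable {𝕜 E ι : Type*} [RCLike 𝕜] [NormedAddCommGroup E] [InnerProductSpace 𝕜 E] [Fintype ι]
  {T : E →ₗ[𝕜] E} (b : OrthonormalBasis ι 𝕜 E) {ev : ι → ℝ}

theorem re_inner_apply_eq_sum (hT : ∀ i, T (b i) = (ev i : 𝕜) • b i) (x : E) :
    re ⟪x, T x⟫_𝕜 = ∑ i, ev i * ‖⟪b i, x⟫_𝕜‖ ^ 2 := by
  have hTx : T x = ∑ i, ((ev i : 𝕜) * ⟪b i, x⟫_𝕜) • b i := by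
    conv_lhs => rw [← b.sum_repr' x]
    simp only [map_sum, map_smul, hT, smul_smul, mul_comm]
  simp only [hTx, inner_sum, inner_smul_right, map_sum]
  refine sum_congr rfl fun i _ => ?_
  rw [← inner_conj_symm x (b i), mul_assoc, RCLike.mul_conj]
  norm_cast

theorem finrank_le_card_filter_le (hT : ∀ i, T (b i) = (ev i : 𝕜) • b i) {c : ℝ}
    (V : Submodule 𝕜 E) (hV : ∀ x ∈ V, re ⟪x, T x⟫_𝕜 ≤ c * ‖x‖ ^ 2) :
    finrank 𝕜 V ≤ #{i | ev i ≤ c} := by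
  classical
  have : FiniteDimensional 𝕜 E := b.toBasis.finiteDimensional_of_finite
  set W := Submodule.span 𝕜 (Set.range (b ∘ Subtype.val : {i // c < ev i} → E))
  have hW : finrank 𝕜 W = #{i | c < ev i} := by
    rw [finrank_span_eq_card (b.orthonormal.linearIndependent.comp _ Subtype.val_injective),
      Fintype.card_subtype]
  have hperp : ∀ x ∈ W, ∀ i, ev i ≤ c → ⟪b i, x⟫_𝕜 = 0 := by
    intro x hx i hi
    refine Submodule.span_induction ?_ (inner_zero_right _)
      (fun _ _ _ _ h₁ h₂ => by rw [inner_add_right, h₁, h₂, add_zero])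
      (fun _ _ _ h => by rw [inner_smul_right, h, mul_zero]) hx
    rintro _ ⟨j, rfl⟩
    exact b.orthonormal.inner_eq_zero fun h => (h ▸ hi).not_gt j.2
  have hdisj : Disjoint V W := by
    rw [Submodule.disjoint_def]
    intro x hxV hxW
    have hsum : ∑ i, (ev i - c) * ‖⟪b i, x⟫_𝕜‖ ^ 2 ≤ 0 := by
      have := hV x hxV
      rw [b.re_inner_apply_eq_sum hT, ← b.sum_sq_norm_inner_right, mul_sum] at this
      simpa [sub_mul] using this
    have hnonneg : ∀ i ∈ univ, 0 ≤ (ev i - c) * ‖⟪b i, x⟫_𝕜‖ ^ 2 := by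
      intro i _
      rcases le_or_gt (ev i) c with h | h
      · simp [hperp x hxW i h]
      · have := sub_pos.2 h
        positivity
    have hzero :=
      (sum_eq_zero_iff_of_nonneg hnonneg).1 (le_antisymm hsum (sum_nonneg hnonneg))
    have hcoef : ∀ i, ⟪b i, x⟫_𝕜 = 0 := by
      intro i
      rcases le_or_gt (ev i) c with h | h
      · exact hperp x hxW i h
      · simpa [(sub_pos.2 h).ne'] using hzero i (mem_univ i)
    rw [← norm_eq_zero, ← sq_eq_zero_iff, ← b.sum_sq_norm_inner_right]
    simp [hcoef]
  have hdim := Submodule.finrank_add_finrank_le_of_disjoint hdisj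
  rw [hW, finrank_eq_card_basis b.toBasis] at hdim
  have hsplit := card_filter_add_card_filter_not (s := univ) (fun i => ev i ≤ c)
  simp only [not_le, card_univ] at hsplit
  omega

end OrthonormalBasis

theorem Tuple.comp_sort_le_of_lt_card_filter {N : ℕ} {α : Type*} [LinearOrder α]
    (f : Fin N → α) {c : α} (j : Fin N) (hj : (j : ℕ) < #{i | f i ≤ c}) :
    (f ∘ Tuple.sort f) j ≤ c := by
  by_contra! h
  have hmaps : ∀ i ∈ ({i | f i ≤ c} : Finset (Fin N)), (Tuple.sort f).symm i ∈ Iio j := by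
    intro i hi
    rw [mem_filter] at hi
    rw [mem_Iio]
    by_contra! hji
    have := Tuple.monotone_sort f hji
    simp only [Function.comp_apply, Equiv.apply_symm_apply] at this
    exact (h.trans_le this).not_ge hi.2
  have := card_le_card_of_injOn _ hmaps (Tuple.sort f).symm.injective.injOn
  rw [Fin.card_Iio] at this
  omega

theorem re_inner_toEuclideanLin_conjTranspose_mul_self {N : ℕ} (M : Matrix (Fin N) (Fin N) ℂ)
    (x : EuclideanSpace ℂ (Fin N)) :
    re ⟪x, toEuclideanLin (Mᴴ * M) x⟫_ℂ = ‖toEuclideanLin M x‖ ^ 2 := by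
  rw [toLpLin_mul_same, LinearMap.comp_apply, toEuclideanLin_conjTranspose_eq_adjoint,
    LinearMap.adjoint_inner_right, inner_self_eq_norm_sq]

theorem sval_le_of_forall_norm_le {N : ℕ} (M : Matrix (Fin N) (Fin N) ℂ) {c : ℝ} (hc : 0 ≤ c)
    (V : Submodule ℂ (EuclideanSpace ℂ (Fin N))) (hV : ∀ x ∈ V, ‖toEuclideanLin M x‖ ≤ c * ‖x‖)
    (k : Fin N) (hk : N ≤ k + finrank ℂ V) :
    sval M k ≤ c := by
  set hH := isHermitian_conjTranspose_mul_self M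
  have hquad : ∀ x ∈ V, re ⟪x, toEuclideanLin (Mᴴ * M) x⟫_ℂ ≤ c ^ 2 * ‖x‖ ^ 2 := by
    intro x hx
    rw [re_inner_toEuclideanLin_conjTranspose_mul_self, ← mul_pow]
    exact pow_le_pow_left₀ (norm_nonneg _) (hV x hx) 2
  have hcount := hH.eigenvectorBasis.finrank_le_card_filter_le (ev := hH.eigenvalues)
    (fun i => by ext1 j; simpa [toLpLin_apply] using congrFun (hH.mulVec_eigenvectorBasis i) j)
    V hquad
  have hsorted := Tuple.comp_sort_le_of_lt_card_filter hH.eigenvalues (c := c ^ 2) k.rev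
    (by rw [Fin.val_rev]; omega)
  calc sval M k ≤ √(c ^ 2) := Real.sqrt_le_sqrt hsorted
    _ = c := Real.sqrt_sq hc

theorem specNorm_nonneg {𝕜 : Type*} [RCLike 𝕜] {m n : ℕ} (A : Matrix (Fin m) (Fin n) 𝕜) :
    0 ≤ specNorm A :=
  norm_nonneg _

theorem norm_toEuclideanLin_apply_le {𝕜 : Type*} [RCLike 𝕜] {m n : ℕ}
    (A : Matrix (Fin m) (Fin n) 𝕜) (x : EuclideanSpace 𝕜 (Fin n)) :
    ‖toEuclideanLin A x‖ ≤ specNorm A * ‖x‖ :=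
  (LinearMap.toContinuousLinearMap (toEuclideanLin A)).le_opNorm x

theorem sval_le_specNorm_of_le_finrank_ker {N : ℕ} (M E : Matrix (Fin N) (Fin N) ℂ) (k : Fin N)
    (hk : N ≤ k + finrank ℂ (LinearMap.ker (toEuclideanLin (M + E)))) :
    sval M k ≤ specNorm E := by
  refine sval_le_of_forall_norm_le M (specNorm_nonneg E) _ (fun x hx => ?_) k hk
  rw [LinearMap.mem_ker, map_add, LinearMap.add_apply, add_eq_zero_iff_eq_neg] at hx
  rw [hx, norm_neg]
  exact norm_toEuclideanLin_apply_le E x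

theorem evalMP_add {n m : ℕ} (A D : Fin (m + 1) → Matrix (Fin n) (Fin n) ℂ) (lam : ℂ) :
    evalMP (fun j => A j + D j) lam = evalMP A lam + evalMP D lam := by
  simp only [evalMP, smul_add, sum_add_distrib]

theorem Fblk_add {n : ℕ} (A B C A' B' C' : Matrix (Fin n) (Fin n) ℂ) (γ : ℂ) :
    Fblk A B C γ + Fblk A' B' C' γ = Fblk (A + A') (B + B') (C + C') γ := by
  have hblocks : fromBlocks (A + A') 0 (γ • (C + C')) (B + B') =
      fromBlocks A 0 (γ • C) B + fromBlocks A' 0 (γ • C') B' := by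
    rw [fromBlocks_add, smul_add, add_zero]
  rw [Fblk, Fblk, Fblk, hblocks]
  rfl

theorem Fblk_mulVec_comp_symm {n : ℕ} (A B C : Matrix (Fin n) (Fin n) ℂ) (γ : ℂ)
    (w : Fin n ⊕ Fin n → ℂ) :
    Fblk A B C γ *ᵥ (w ∘ finSumFinEquiv.symm) =
      (fromBlocks A 0 (γ • C) B *ᵥ w) ∘ finSumFinEquiv.symm := by
  rw [Fblk, reindex_apply, submatrix_mulVec_equiv, Equiv.symm_symm, Function.comp_assoc,
    Equiv.symm_comp_self, Function.comp_id]

theorem linearIndependent_sumElim_pair {K ι κ : Type*} [Field K] {x : ι → K} {y z : κ → K}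
    (hx : x ≠ 0) (hy : y ≠ 0) :
    LinearIndependent K ![Sum.elim (0 : ι → K) y, Sum.elim x z] := by
  obtain ⟨i, hi⟩ : ∃ i, x i ≠ 0 := Function.ne_iff.1 hx
  obtain ⟨j, hj⟩ : ∃ j, y j ≠ 0 := Function.ne_iff.1 hy
  rw [LinearIndependent.pair_iff]
  intro s t hst
  have ht : t = 0 := by simpa [hi] using congrFun hst (Sum.inl i)
  subst ht
  exact ⟨by simpa [hj] using congrFun hst (Sum.inr j), rfl⟩

theorem two_le_finrank_ker_Fblk {n : ℕ} {Q₁ Q₂ : Matrix (Fin n) (Fin n) ℂ} (c γ : ℂ)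
    {x₁ x₂ : Fin n → ℂ} (hx₁ : x₁ ≠ 0) (hQx₁ : Q₁ *ᵥ x₁ = 0)
    (hx₂ : x₂ ≠ 0) (hQx₂ : Q₂ *ᵥ x₂ = 0) :
    2 ≤ finrank ℂ (LinearMap.ker (toEuclideanLin (Fblk Q₁ Q₂ (c • (Q₁ - Q₂)) γ))) := by
  let Φ : (Fin n ⊕ Fin n → ℂ) ≃ₗ[ℂ] EuclideanSpace ℂ (Fin (n + n)) :=
    (LinearEquiv.funCongrLeft ℂ ℂ finSumFinEquiv.symm).trans (WithLp.linearEquiv 2 ℂ _).symm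
  let w := ![Sum.elim (0 : Fin n → ℂ) x₂, Sum.elim x₁ ((γ * c) • x₁)]
  have hli : LinearIndependent ℂ (Φ ∘ w) :=
    (linearIndependent_sumElim_pair hx₁ hx₂).map' Φ.toLinearMap Φ.ker
  have hΦ : ∀ v, toEuclideanLin (Fblk Q₁ Q₂ (c • (Q₁ - Q₂)) γ) (Φ v) =
      WithLp.toLp 2 ((fromBlocks Q₁ 0 (γ • c • (Q₁ - Q₂)) Q₂ *ᵥ v) ∘ finSumFinEquiv.symm) :=
    fun v => by rw [toLpLin_apply, ← Fblk_mulVec_comp_symm]; rfl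
  have hker : ∀ i, (Φ ∘ w) i ∈ LinearMap.ker (toEuclideanLin (Fblk Q₁ Q₂ (c • (Q₁ - Q₂)) γ)) := by
    rw [Fin.forall_fin_two]
    have hcancel : (γ • c • (Q₁ - Q₂)) *ᵥ x₁ + Q₂ *ᵥ ((γ * c) • x₁) = 0 := by
      rw [smul_smul, smul_mulVec, mulVec_smul, sub_mulVec, hQx₁, zero_sub, smul_neg,
        neg_add_cancel]
    simp [w, hΦ, fromBlocks_mulVec, hQx₁, hQx₂, hcancel]
  calc 2 = finrank ℂ (Submodule.span ℂ (Set.range (Φ ∘ w))) := by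
        rw [finrank_span_eq_card hli, Fintype.card_fin]
    _ ≤ _ := Submodule.finrank_mono (Submodule.span_le.2 (Set.range_subset_iff.2 hker))

theorem stmt0 {n m : ℕ} (hn : 0 < n)
    (A D : Fin (m + 1) → Matrix (Fin n) (Fin n) ℂ)
    (μ₁ μ₂ : ℂ)
    (h1 : ∃ x : Fin n → ℂ, x ≠ 0 ∧ (evalMP (fun j => A j + D j) μ₁).mulVec x = 0)
    (h2 : ∃ x : Fin n → ℂ, x ≠ 0 ∧ (evalMP (fun j => A j + D j) μ₂).mulVec x = 0)
    (γ : ℂ) :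
    sval (Fblk (evalMP A μ₁) (evalMP A μ₂)
        ((μ₁ - μ₂)⁻¹ • (evalMP A μ₁ - evalMP A μ₂)) γ) ⟨n + n - 2, by omega⟩ ≤
      specNorm (Fblk (evalMP D μ₁) (evalMP D μ₂)
        ((μ₁ - μ₂)⁻¹ • (evalMP D μ₁ - evalMP D μ₂)) γ) := by
  obtain ⟨x₁, hx₁, hQx₁⟩ := h1
  obtain ⟨x₂, hx₂, hQx₂⟩ := h2
  apply sval_le_specNorm_of_le_finrank_ker
  rw [Fblk_add, ← smul_add, sub_add_sub_comm, ← evalMP_add, ← evalMP_add]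
  have hker := two_le_finrank_ker_Fblk (μ₁ - μ₂)⁻¹ γ hx₁ hQx₁ hx₂ hQx₂
  rw [Fin.val_mk]
  omega
end

section
/- Suppose ([u₁;u₂], [v₁;v₂]) is a pair of left and right singular vectors of F = F[P(μ₁,μ₂);γ*] corresponding to the singular value s* > 0, i.e., F[v₁;v₂] = s*[u₁;u₂] and [u₁*, u₂*]F = s*[v₁*, v₂*]. If additionally u₂* P[μ₁,μ₂] v₁ = 0, where P[μ₁,μ₂] = (P(μ₁)−P(μ₂))/(μ₁−μ₂), then u₂* u₁ = v₂* v₁. -/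
open Matrix BigOperators

/-! The pairing `u₂* P v₁` computed with `P = P(μ₁)` gives `s·u₂*u₁`, and with `P = P(μ₂)` gives
`s·v₂*v₁`; the condition `u₂* P[μ₁,μ₂] v₁ = 0` says exactly that the two pairings agree. -/

section

variable {K : Type*} [Field K] {m n : Type*} [Fintype m] [Fintype n]

theorem dotProduct_mulVec_eq_of_smul_sub {P Q : Matrix m n K} {c : K} (hc : c ≠ 0)
    {w : m → K} {v : n → K} (h : w ⬝ᵥ ((c • (P - Q)) *ᵥ v) = 0) :
    w ⬝ᵥ (P *ᵥ v) = w ⬝ᵥ (Q *ᵥ v) := by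
  rw [smul_mulVec, dotProduct_smul, smul_eq_mul, mul_eq_zero, or_iff_right hc, sub_mulVec,
    dotProduct_sub, sub_eq_zero] at h
  exact h

theorem dotProduct_eq_of_mulVec_eq_of_vecMul_eq {P Q : Matrix m n K} {s : K} (hs : s ≠ 0)
    {u w : m → K} {v z : n → K} (hP : P *ᵥ v = s • u) (hQ : w ᵥ* Q = s • z)
    (hPQ : w ⬝ᵥ (P *ᵥ v) = w ⬝ᵥ (Q *ᵥ v)) :
    w ⬝ᵥ u = z ⬝ᵥ v := by
  apply mul_left_cancel₀ hs
  calc s * (w ⬝ᵥ u) = w ⬝ᵥ (P *ᵥ v) := by rw [hP, dotProduct_smul, smul_eq_mul]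
    _ = (w ᵥ* Q) ⬝ᵥ v := by rw [hPQ, dotProduct_mulVec]
    _ = s * (z ⬝ᵥ v) := by rw [hQ, smul_dotProduct, smul_eq_mul]

end

theorem stmt3_general {n m : ℕ} (A : Fin (m + 1) → Matrix (Fin n) (Fin n) ℂ)
    (μ₁ μ₂ : ℂ) (hμ : μ₁ ≠ μ₂) (s : ℝ) (hs : 0 < s)
    (u₁ u₂ v₁ v₂ : Fin n → ℂ)
    (h1 : (evalMP A μ₁).mulVec v₁ = (s : ℂ) • u₁)
    (h4 : Matrix.vecMul (star u₂) (evalMP A μ₂) = (s : ℂ) • star v₂)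
    (horth : dotProduct (star u₂)
        (((μ₁ - μ₂)⁻¹ • (evalMP A μ₁ - evalMP A μ₂)).mulVec v₁) = 0) :
    dotProduct (star u₂) u₁ = dotProduct (star v₂) v₁ :=
  dotProduct_eq_of_mulVec_eq_of_vecMul_eq (by exact_mod_cast hs.ne') h1 h4
    (dotProduct_mulVec_eq_of_smul_sub (inv_ne_zero (sub_ne_zero.mpr hμ)) horth)

theorem stmt3 {n m : ℕ} (A : Fin (m + 1) → Matrix (Fin n) (Fin n) ℂ)
    (μ₁ μ₂ : ℂ) (hμ : μ₁ ≠ μ₂) (γ : ℝ) (hγ : 0 < γ) (s : ℝ) (hs : 0 < s)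
    (u₁ u₂ v₁ v₂ : Fin n → ℂ)
    (h1 : (evalMP A μ₁).mulVec v₁ = (s : ℂ) • u₁)
    (h2 : (γ : ℂ) • ((μ₁ - μ₂)⁻¹ • (evalMP A μ₁ - evalMP A μ₂)).mulVec v₁
          + (evalMP A μ₂).mulVec v₂ = (s : ℂ) • u₂)
    (h3 : Matrix.vecMul (star u₁) (evalMP A μ₁)
          + (γ : ℂ) • Matrix.vecMul (star u₂) ((μ₁ - μ₂)⁻¹ • (evalMP A μ₁ - evalMP A μ₂))
          = (s : ℂ) • star v₁)
    (h4 : Matrix.vecMul (star u₂) (evalMP A μ₂) = (s : ℂ) • star v₂)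
    (horth : dotProduct (star u₂)
        (((μ₁ - μ₂)⁻¹ • (evalMP A μ₁ - evalMP A μ₂)).mulVec v₁) = 0) :
    dotProduct (star u₂) u₁ = dotProduct (star v₂) v₁ :=
  stmt3_general A μ₁ μ₂ hμ s hs u₁ u₂ v₁ v₂ h1 h4 horth
end

section
/- (Case γ* = 0) Let u_i, v_i ∈ ℂⁿ (i = 1,2) be left and right singular vectors of P(μ_i) for the smallest singular value σ_i = s_n(P(μ_i)), i.e., P(μ_i)v_i = σ_i u_i with ‖u_i‖ = ‖v_i‖ = 1. If v₁ and v₂ are linearly independent, then the constant matrix Δ₀ = −[u₁ u₂]·diag(σ₁,σ₂)·[v₁ v₂]^† satisfies (P(μ_i) + Δ₀)v_i = 0 for i = 1,2; hence the matrix polynomial Q₀(λ) = P(λ) + Δ₀ has μ₁ and μ₂ as eigenvalues with eigenvectors v₁ and v₂. -/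
/-!
Since `v₁, v₂` are linearly independent, `Vᴴ V` is invertible for `V = [v₁ v₂]`, so
`V† = (Vᴴ V)⁻¹ Vᴴ` is a left inverse of `V`. Hence `Δ₀ V = -[σ₁ u₁, σ₂ u₂]`, i.e. `Δ₀ vᵢ = -σᵢ uᵢ`,
which cancels `P(μᵢ) vᵢ = σᵢ uᵢ`.
-/

open Matrix BigOperators

namespace Matrix

variable {m n K : Type*} [Fintype m] [Fintype n] [DecidableEq n]
  [Field K] [PartialOrder K] [StarRing K] [StarOrderedRing K]

theorem isUnit_conjTranspose_mul_self_of_linearIndependent_cols {V : Matrix m n K}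
    (hV : LinearIndependent K V.col) : IsUnit (Vᴴ * V) := by
  refine mulVec_injective_iff_isUnit.mp <|
    (injective_iff_map_eq_zero (Vᴴ * V).mulVecLin).mpr fun x hx => ?_
  exact (injective_iff_map_eq_zero V.mulVecLin).mp (mulVec_injective_iff.mpr hV) x
    ((conjTranspose_mul_self_mulVec_eq_zero V x).mp hx)

end Matrix

open scoped ComplexOrder in
theorem pinvFC_mul_self {n m : ℕ} {V : Matrix (Fin n) (Fin m) ℂ}
    (hV : LinearIndependent ℂ V.col) : pinvFC V * V = 1 := by
  rw [pinvFC, Matrix.mul_assoc, Matrix.nonsing_inv_mul _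
    ((isUnit_conjTranspose_mul_self_of_linearIndependent_cols hV).map detMonoidHom)]

theorem col_colPair {n : ℕ} (a b : Fin n → ℂ) : (colPair a b).col = ![a, b] := by
  ext j i; fin_cases j <;> rfl

theorem colPair_mulVec {n : ℕ} (a b : Fin n → ℂ) (x y : ℂ) :
    colPair a b *ᵥ ![x, y] = x • a + y • b := by
  ext i; simp [colPair, mulVec, dotProduct, Fin.sum_univ_two, mul_comm]

theorem colPair_mul_diagonal {n : ℕ} (a b : Fin n → ℂ) (x y : ℂ) :
    colPair a b * diagonal ![x, y] = colPair (x • a) (y • b) := by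
  ext i j; fin_cases j <;> simp [colPair, mul_comm]

theorem stmt12 {n m : ℕ} (A : Fin (m + 1) → Matrix (Fin n) (Fin n) ℂ)
    (μ₁ μ₂ : ℂ) (σ₁ σ₂ : ℝ)
    (u₁ u₂ v₁ v₂ : Fin n → ℂ)
    (h1 : (evalMP A μ₁).mulVec v₁ = (σ₁ : ℂ) • u₁)
    (h2 : (evalMP A μ₂).mulVec v₂ = (σ₂ : ℂ) • u₂)
    (hli : LinearIndependent ℂ ![v₁, v₂]) :
    let Δ₀ : Matrix (Fin n) (Fin n) ℂ :=
      -(colPair u₁ u₂ * Matrix.diagonal ![(σ₁ : ℂ), (σ₂ : ℂ)] * pinvFC (colPair v₁ v₂))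
    (evalMP A μ₁ + Δ₀).mulVec v₁ = 0 ∧ (evalMP A μ₂ + Δ₀).mulVec v₂ = 0 := by
  intro Δ₀
  have hpinv : pinvFC (colPair v₁ v₂) * colPair v₁ v₂ = 1 :=
    pinvFC_mul_self (by rwa [col_colPair])
  have hΔ (x y : ℂ) :
      Δ₀ *ᵥ (x • v₁ + y • v₂) = -(x • (σ₁ : ℂ) • u₁ + y • (σ₂ : ℂ) • u₂) := by
    rw [← colPair_mulVec, ← colPair_mulVec, neg_mulVec, mulVec_mulVec, Matrix.mul_assoc, hpinv,
      Matrix.mul_one, colPair_mul_diagonal]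
  have hΔ₁ : Δ₀ *ᵥ v₁ = -((σ₁ : ℂ) • u₁) := by simpa using hΔ 1 0
  have hΔ₂ : Δ₀ *ᵥ v₂ = -((σ₂ : ℂ) • u₂) := by simpa using hΔ 0 1
  constructor
  · rw [add_mulVec, h1, hΔ₁, add_neg_cancel]
  · rw [add_mulVec, h2, hΔ₂, add_neg_cancel]
end
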